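/- Let b ≥ 0, c > 0, β̃ ∈ {0,1}, and let 0 < λ < μ be two distinct positive reals. If b² λ^{2β̃ - 1} ≠ 4c² and b² μ^{2β̃ - 1} ≠ 4c², then the root sets of ω_λ(z) = z² + bλ^{β̃} z + c²λ and ω_μ(z) = z² + bμ^{β̃} z + c²μ are disjoint. -/
import Mathlib


/-- the root sets of ω_λ and ω_μ are disjoint for distinct eigenvalues. -/
theorem poles_differ_for_different_eigenvalues
    (b c : ℝ) (hb : 0 ≤ b) (hc : 0 < c) (bt : ℝ) (hbt : bt = 0 ∨ bt = 1)
    (l m : ℝ) (hl : 0 < l) (hlm : l < m)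
    (hnl : b ^ 2 * l ^ (2 * bt - 1) ≠ 4 * c ^ 2)
    (hnm : b ^ 2 * m ^ (2 * bt - 1) ≠ 4 * c ^ 2) :
    ∀ z : ℂ, ¬ (z ^ 2 + (b * l ^ bt : ℝ) * z + (c ^ 2 * l : ℝ) = 0 ∧
                z ^ 2 + (b * m ^ bt : ℝ) * z + (c ^ 2 * m : ℝ) = 0) := by
  rintro z ⟨h1, h2⟩
  rcases hbt with rfl | rfl
  · simp only [Real.rpow_zero, mul_one] at h1 h2
    have h3 : ((c ^ 2 * l : ℝ) : ℂ) = ((c ^ 2 * m : ℝ) : ℂ) := by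
      linear_combination h1 - h2
    have h4 : c ^ 2 * l = c ^ 2 * m := Complex.ofReal_injective h3
    have hc2 : 0 < c ^ 2 := by positivity
    nlinarith
  · simp only [Real.rpow_one] at h1 h2
    push_cast at h1 h2
    have h3 : ((l : ℂ) - m) * ((b : ℂ) * z + (c : ℂ) ^ 2) = 0 := by
      linear_combination h1 - h2
    have hlm' : ((l : ℂ) - m) ≠ 0 := by
      intro h
      have : (l : ℝ) = m := by exact_mod_cast sub_eq_zero.mp h
      linarith
    have h4 : (b : ℂ) * z + (c : ℂ) ^ 2 = 0 :=
      (mul_eq_zero.mp h3).resolve_left hlm'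
    have h5 : (c : ℂ) ^ 4 = 0 := by
      linear_combination (b : ℂ) ^ 2 * h1 -
        ((b : ℂ) * z - (c : ℂ) ^ 2 + (b : ℂ) ^ 2 * l) * h4
    have h6 : c ^ 4 = 0 := by exact_mod_cast h5
    have : 0 < c ^ 4 := by positivity
    linarith
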